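/- Let R be a finite commutative local principal ring. An element x ∈ H(R) is a product of finitely many (r ≥ 1) idempotents if and only if x is a product of two idempotents. -/

import Mathlib

/-!
If `2` is not a unit of `R`, an idempotent `e` of `H(R)` satisfies `(1 - 2 re e) im e = 0` with
`1 - 2 re e` a unit, so `e` is a scalar idempotent, i.e. `0` or `1`, and so is every product of
idempotents.

If `2` is a unit, `a ^ 2 + b ^ 2 = -1` is solvable over the finite residue field and lifts to `R`
by Hensel's lemma, which splits `H(R) ≃ M₂(R)`. Over a local ring an idempotent of `M₂(R)` is `0`,
`1` or `x yᵀ` with `yᵀ x = 1`, so a product of idempotents is `1` or `c • x yᵀ` with `x`, `y`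
unimodular; the latter equals `(x aᵀ)(b yᵀ)` as soon as `aᵀ x = yᵀ b = 1` and `aᵀ b = c`, and such
`a`, `b` exist.
-/

open Quaternion Matrix IsLocalRing

theorem IsIdempotentElem.eq_zero_or_one_of_isLocalRing {R : Type*} [CommRing R] [IsLocalRing R]
    {e : R} (he : IsIdempotentElem e) : e = 0 ∨ e = 1 := by
  rcases isUnit_or_isUnit_one_sub_self e with h | h
  · exact .inr ((IsIdempotentElem.iff_eq_one_of_isUnit h).mp he)
  · exact .inl (h.mul_right_eq_zero.mp he.one_sub_mul_self)

def ProdsOfIdempotentsAreProdsOfTwo (M : Type*) [Monoid M] : Prop :=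
  ∀ l : List M, (∀ e ∈ l, IsIdempotentElem e) →
    ∃ e₁ e₂ : M, IsIdempotentElem e₁ ∧ IsIdempotentElem e₂ ∧ l.prod = e₁ * e₂

namespace ProdsOfIdempotentsAreProdsOfTwo

theorem of_mulEquiv {M N : Type*} [Monoid M] [Monoid N] (f : M ≃* N)
    (h : ProdsOfIdempotentsAreProdsOfTwo N) : ProdsOfIdempotentsAreProdsOfTwo M := by
  intro l hl
  obtain ⟨e₁, e₂, h₁, h₂, hprod⟩ := h (l.map f) (by simpa using fun e he ↦ (hl e he).map f)
  refine ⟨f.symm e₁, f.symm e₂, h₁.map f.symm, h₂.map f.symm, f.injective ?_⟩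
  simpa [map_list_prod] using hprod

theorem of_forall_eq_zero_or_one {M₀ : Type*} [MonoidWithZero M₀]
    (h : ∀ e : M₀, IsIdempotentElem e → e = 0 ∨ e = 1) : ProdsOfIdempotentsAreProdsOfTwo M₀ := by
  intro l hl
  have hprod : l.prod = 0 ∨ l.prod = 1 := by
    induction l with
    | nil => exact .inr rfl
    | cons e t ih =>
      rw [List.forall_mem_cons] at hl
      rcases h e hl.1 with rfl | rfl
      · simp
      · simpa using ih hl.2
  rcases hprod with h0 | h1
  · exact ⟨0, 0, .zero, .zero, by rw [h0, mul_zero]⟩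
  · exact ⟨1, 1, .one, .one, by rw [h1, mul_one]⟩

end ProdsOfIdempotentsAreProdsOfTwo

namespace Matrix

variable {R : Type*} [CommRing R]

theorem isIdempotentElem_vecMulVec {n : Type*} [Fintype n] {x y : n → R} (h : y ⬝ᵥ x = 1) :
    IsIdempotentElem (vecMulVec x y) := by
  rw [IsIdempotentElem, vecMulVec_mul_vecMulVec, h, one_smul]

theorem mul_self_fin_two (M : Matrix (Fin 2) (Fin 2) R) : M * M = M.trace • M - M.det • 1 := by
  ext i j
  fin_cases i <;> fin_cases j <;> simp [mul_apply, trace_fin_two, det_fin_two] <;> ring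

theorem mul_apply_eq_mul_apply_of_det_eq_zero {M : Matrix (Fin 2) (Fin 2) R} (hM : M.det = 0)
    (i j k : Fin 2) : M i i * M k j = M k i * M i j := by
  rw [det_fin_two] at hM
  fin_cases i <;> fin_cases j <;> fin_cases k <;> simp <;> first | ring | linear_combination hM

theorem eq_vecMulVec_of_det_eq_zero {M : Matrix (Fin 2) (Fin 2) R} (hM : M.det = 0) {i : Fin 2}
    {u : R} (hu : M i i * u = 1) : M = vecMulVec (fun k ↦ M k i) (u • M i) := by
  ext k j
  simp only [vecMulVec_apply, Pi.smul_apply, smul_eq_mul]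
  linear_combination (-M k j) * hu + u * mul_apply_eq_mul_apply_of_det_eq_zero hM i j k

variable [IsLocalRing R]

theorem eq_zero_or_one_or_vecMulVec_of_isIdempotentElem {E : Matrix (Fin 2) (Fin 2) R}
    (hE : IsIdempotentElem E) :
    E = 0 ∨ E = 1 ∨ ∃ x y : Fin 2 → R, y ⬝ᵥ x = 1 ∧ E = vecMulVec x y := by
  have hdet : IsIdempotentElem E.det := by rw [IsIdempotentElem, ← det_mul, hE.eq]
  rcases hdet.eq_zero_or_one_of_isLocalRing with hdet | hdet
  swap
  · exact .inr <| .inl <| (IsIdempotentElem.iff_eq_one_of_isUnit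
      ((isUnit_iff_isUnit_det E).mpr (hdet ▸ isUnit_one))).mp hE
  have hE' : E = E.trace • E := by simpa [hdet, hE.eq] using mul_self_fin_two E
  have htr : IsIdempotentElem E.trace := by
    rw [IsIdempotentElem]
    conv_rhs => rw [hE', trace_smul, smul_eq_mul]
  rcases htr.eq_zero_or_one_of_isLocalRing with htr | htr
  · exact .inl (by rw [hE', htr, zero_smul])
  refine .inr (.inr ?_)
  obtain ⟨i, u, hu⟩ : ∃ i : Fin 2, ∃ u : R, E i i * u = 1 := by
    rw [trace_fin_two] at htr
    rcases isUnit_or_isUnit_of_isUnit_add (htr ▸ isUnit_one) with h | h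
    · exact ⟨0, h.exists_right_inv⟩
    · exact ⟨1, h.exists_right_inv⟩
  refine ⟨_, _, ?_, eq_vecMulVec_of_det_eq_zero hdet hu⟩
  have hii : E i ⬝ᵥ (fun k ↦ E k i) = E i i := by rw [← mul_apply', hE.eq]
  rw [smul_dotProduct, hii, smul_eq_mul, mul_comm, hu]

theorem exists_dotProduct_eq_one_and_isUnit_det {x y : Fin 2 → R} (hx : ∃ a, a ⬝ᵥ x = 1)
    (hy : ∃ b, y ⬝ᵥ b = 1) : ∃ b, y ⬝ᵥ b = 1 ∧ IsUnit !![x 0, x 1; b 0, b 1].det := by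
  obtain ⟨a, ha⟩ := hx
  obtain ⟨b, hb⟩ := hy
  simp only [det_fin_two_of, dotProduct, Fin.sum_univ_two] at ha hb ⊢
  -- Binet–Cauchy: `(a ⬝ᵥ x) (y ⬝ᵥ b) = (y ⬝ᵥ x) (a ⬝ᵥ b) + det (x, b) det (a, y)`
  have hspan : (y 0 * x 0 + y 1 * x 1) * (a 0 * b 0 + a 1 * b 1) +
      (x 0 * b 1 - x 1 * b 0) * (a 0 * y 1 - a 1 * y 0) = 1 := by
    linear_combination (y 0 * b 0 + y 1 * b 1) * ha + hb
  rcases isUnit_or_isUnit_of_isUnit_add (hspan ▸ isUnit_one) with h | h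
  · -- moving `b` along `(-y 1, y 0)` keeps `y ⬝ᵥ b` and adds multiples of `y ⬝ᵥ x` to the det
    obtain ⟨s, hs⟩ := (isUnit_of_mul_isUnit_left h).exists_right_inv
    set t := s * (1 - (x 0 * b 1 - x 1 * b 0))
    refine ⟨![b 0 - t * y 1, b 1 + t * y 0], ?_, ?_⟩
    · simp only [cons_val_zero, cons_val_one]
      linear_combination hb
    · convert isUnit_one (M := R) using 1
      simp only [cons_val_zero, cons_val_one]
      linear_combination (1 - (x 0 * b 1 - x 1 * b 0)) * hs
  · exact ⟨b, hb, isUnit_of_mul_isUnit_left h⟩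

theorem exists_dotProduct_eq_one_and_dotProduct_eq {x y : Fin 2 → R} (hx : ∃ a, a ⬝ᵥ x = 1)
    (hy : ∃ b, y ⬝ᵥ b = 1) (c : R) : ∃ a b, a ⬝ᵥ x = 1 ∧ y ⬝ᵥ b = 1 ∧ a ⬝ᵥ b = c := by
  obtain ⟨b, hb, hdet⟩ := exists_dotProduct_eq_one_and_isUnit_det hx hy
  obtain ⟨δ, hδ⟩ := hdet.exists_right_inv
  rw [det_fin_two_of] at hδ
  refine ⟨δ • ![b 1 - c * x 1, c * x 0 - b 0], b, ?_, hb, ?_⟩ <;>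
    simp only [dotProduct, Fin.sum_univ_two, Pi.smul_apply, smul_eq_mul, cons_val_zero,
      cons_val_one]
  · linear_combination hδ
  · linear_combination c * hδ

theorem exists_isIdempotentElem_mul_eq_smul_vecMulVec {x y : Fin 2 → R} (hx : ∃ a, a ⬝ᵥ x = 1)
    (hy : ∃ b, y ⬝ᵥ b = 1) (c : R) :
    ∃ F G : Matrix (Fin 2) (Fin 2) R, IsIdempotentElem F ∧ IsIdempotentElem G ∧
      F * G = c • vecMulVec x y := by
  obtain ⟨a, b, ha, hb, hab⟩ := exists_dotProduct_eq_one_and_dotProduct_eq hx hy c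
  refine ⟨vecMulVec x a, vecMulVec b y, isIdempotentElem_vecMulVec ha,
    isIdempotentElem_vecMulVec hb, ?_⟩
  rw [vecMulVec_mul_vecMulVec, hab, vecMulVec_smul]

theorem prod_eq_one_or_eq_smul_vecMulVec (l : List (Matrix (Fin 2) (Fin 2) R))
    (hl : ∀ e ∈ l, IsIdempotentElem e) :
    l.prod = 1 ∨ ∃ (c : R) (x y : Fin 2 → R), (∃ a, a ⬝ᵥ x = 1) ∧ (∃ b, y ⬝ᵥ b = 1) ∧
      l.prod = c • vecMulVec x y := by
  induction l with
  | nil => exact .inl rfl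
  | cons E t ih =>
    rw [List.forall_mem_cons] at hl
    rw [List.prod_cons]
    rcases eq_zero_or_one_or_vecMulVec_of_isIdempotentElem hl.1 with rfl | rfl | ⟨x, y, hyx, rfl⟩
    · have hunit : (Pi.single 0 1 : Fin 2 → R) ⬝ᵥ Pi.single 0 1 = 1 := by simp
      exact .inr ⟨0, _, _, ⟨_, hunit⟩, ⟨_, hunit⟩, by rw [zero_mul, zero_smul]⟩
    · simpa using ih hl.2
    · refine .inr ?_
      rcases ih hl.2 with h | ⟨c, x', y', -, hy', h⟩
      · exact ⟨1, x, y, ⟨y, hyx⟩, ⟨x, hyx⟩, by rw [h, mul_one, one_smul]⟩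
      · refine ⟨(y ⬝ᵥ x') * c, x, y', ⟨y, hyx⟩, hy', ?_⟩
        rw [h, mul_smul_comm, vecMulVec_mul_vecMulVec, vecMulVec_smul, smul_smul, mul_comm]

theorem prodsOfIdempotentsAreProdsOfTwo_fin_two :
    ProdsOfIdempotentsAreProdsOfTwo (Matrix (Fin 2) (Fin 2) R) := by
  intro l hl
  rcases prod_eq_one_or_eq_smul_vecMulVec l hl with h | ⟨c, x, y, hx, hy, h⟩
  · exact ⟨1, 1, .one, .one, by rw [h, mul_one]⟩
  · obtain ⟨F, G, hF, hG, hFG⟩ := exists_isIdempotentElem_mul_eq_smul_vecMulVec hx hy c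
    exact ⟨F, G, hF, hG, h.trans hFG.symm⟩

end Matrix

open Polynomial in
theorem IsLocalRing.exists_sq_add_sq_eq_neg_one {R : Type*} [CommRing R] [IsLocalRing R]
    [Finite R] (h2 : IsUnit (2 : R)) : ∃ a b : R, a ^ 2 + b ^ 2 = -1 := by
  let k := ResidueField R
  have : Finite k := Finite.of_surjective _ residue_surjective
  have : NeZero (ringChar k) := ⟨CharP.char_ne_zero_of_finite k _⟩
  obtain ⟨m, n, hmn⟩ := CharP.sq_add_sq k (ringChar k) (-1)
  have hres : residue R ((m : R) ^ 2 + (n : R) ^ 2 + 1) = 0 := by simp [hmn]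
  obtain ⟨a₀, b₀, ha₀, hab₀⟩ : ∃ a₀ b₀ : R, IsUnit a₀ ∧ residue R (a₀ ^ 2 + b₀ ^ 2 + 1) = 0 := by
    by_cases hm : IsUnit (m : R)
    · exact ⟨m, n, hm, hres⟩
    · refine ⟨n, m, ?_, by rw [← hres]; ring_nf⟩
      rw [← residue_ne_zero_iff_isUnit]
      rw [← residue_ne_zero_iff_isUnit, not_not] at hm
      intro hn
      simp [hm, hn] at hres
  -- Hensel's lemma for `X ^ 2 + (b₀ ^ 2 + 1)`, whose derivative `2 a₀` at `a₀` is a unit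
  obtain ⟨a, ha, -⟩ := HenselianRing.is_henselian (I := maximalIdeal R)
    (X ^ 2 + C (b₀ ^ 2 + 1)) (monic_X_pow_add_C _ two_ne_zero) a₀
    (by rwa [eval_add, eval_pow, eval_X, eval_C, ← add_assoc, ← Ideal.Quotient.eq_zero_iff_mem])
    (by
      rw [derivative_add, derivative_C, add_zero, derivative_X_pow]
      simpa using (h2.mul ha₀).map (Ideal.Quotient.mk (maximalIdeal R)))
  exact ⟨a, b₀, by
    rw [IsRoot.def, eval_add, eval_pow, eval_X, eval_C] at ha
    linear_combination ha⟩

namespace Quaternion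

variable {R : Type*} [CommRing R]

def matrixBasis {a b : R} (hab : a ^ 2 + b ^ 2 = -1) :
    QuaternionAlgebra.Basis (Matrix (Fin 2) (Fin 2) R) (-1 : R) 0 (-1) where
  i := !![a, b; b, -a]
  j := !![0, 1; -1, 0]
  k := !![-b, a; a, b]
  i_mul_i := by
    rw [mul_fin_two, one_fin_two]
    ext i j; fin_cases i <;> fin_cases j <;> simp <;> first | ring1 | linear_combination hab
  j_mul_j := by
    rw [mul_fin_two, one_fin_two]
    ext i j; fin_cases i <;> fin_cases j <;> simp
  i_mul_j := by
    rw [mul_fin_two]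
    ext i j; fin_cases i <;> fin_cases j <;> simp
  j_mul_i := by
    rw [mul_fin_two]
    ext i j; fin_cases i <;> fin_cases j <;> simp

theorem matrixBasis_liftHom_surjective {a b : R} (hab : a ^ 2 + b ^ 2 = -1) (h2 : IsUnit (2 : R)) :
    Function.Surjective (matrixBasis hab).liftHom := by
  obtain ⟨t, ht⟩ := h2.exists_right_inv
  intro M
  obtain ⟨p, q, r, s, rfl⟩ : ∃ p q r s, M = !![p, q; r, s] := ⟨_, _, _, _, eta_fin_two M⟩
  refine ⟨⟨t * (p + s), -(a * (t * (p - s)) + b * (t * (q + r))), t * (q - r),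
    b * (t * (p - s)) - a * (t * (q + r))⟩, ?_⟩
  simp only [QuaternionAlgebra.Basis.liftHom_apply, QuaternionAlgebra.Basis.lift, matrixBasis]
  ext i j
  fin_cases i <;> fin_cases j <;> simp [algebraMap_matrix_apply, mul_apply]
  · linear_combination -(t * (p - s)) * hab + p * ht
  · linear_combination -(t * (q + r)) * hab + q * ht
  · linear_combination -(t * (q + r)) * hab + r * ht
  · linear_combination t * (p - s) * hab + s * ht

variable [Finite R]

noncomputable def equivMatrix {a b : R} (hab : a ^ 2 + b ^ 2 = -1) (h2 : IsUnit (2 : R)) :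
    ℍ[R] ≃ₐ[R] Matrix (Fin 2) (Fin 2) R :=
  let e := QuaternionAlgebra.equivTuple (-1 : R) 0 (-1)
  have : Finite ℍ[R,-1,0,-1] := .of_equiv _ e.symm
  AlgEquiv.ofBijective (matrixBasis hab).liftHom <|
    (matrixBasis_liftHom_surjective hab h2).bijective_of_nat_card_le <| by
      rw [Nat.card_congr e]; simp [Matrix, Nat.card_fun, ← pow_mul]

theorem eq_zero_or_one_of_isIdempotentElem [IsLocalRing R] (h2 : ¬IsUnit (2 : R)) {e : ℍ[R]}
    (he : IsIdempotentElem e) : e = 0 ∨ e = 1 := by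
  have hu : IsUnit (1 - 2 * e.re) :=
    isUnit_one_sub_self_of_mem_nonunits _ fun h ↦ h2 (isUnit_of_mul_isUnit_left h)
  -- the `i`, `j`, `k` coordinates `c` of `e * e = e` read `2 * e.re * c = c`
  have him : ∀ c : R, 2 * e.re * c = c → c = 0 := fun c hc ↦
    hu.mul_right_eq_zero.mp (by linear_combination -hc)
  have hI := him e.imI <| by
    have := congrArg (·.imI) he.eq; rw [imI_mul] at this; linear_combination this
  have hJ := him e.imJ <| by
    have := congrArg (·.imJ) he.eq; rw [imJ_mul] at this; linear_combination this
  have hK := him e.imK <| by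
    have := congrArg (·.imK) he.eq; rw [imK_mul] at this; linear_combination this
  have hre : e = e.re := by ext <;> simp [hI, hJ, hK]
  have hidem : IsIdempotentElem e.re := coe_injective <| by rw [coe_mul, ← hre, he.eq]
  rcases hidem.eq_zero_or_one_of_isLocalRing with h | h
  · exact .inl (by rw [hre, h, coe_zero])
  · exact .inr (by rw [hre, h, coe_one])

end Quaternion

theorem quaternion_prod_idempotents_iff_two_general (R : Type*) [CommRing R] [Finite R]
    [IsLocalRing R] (x : ℍ[R]) :
    (∃ l : List ℍ[R], l ≠ [] ∧ (∀ e ∈ l, IsIdempotentElem e) ∧ x = l.prod) ↔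
      (∃ e₁ e₂ : ℍ[R], IsIdempotentElem e₁ ∧ IsIdempotentElem e₂ ∧ x = e₁ * e₂) := by
  have hprod : ProdsOfIdempotentsAreProdsOfTwo ℍ[R] := by
    by_cases h2 : IsUnit (2 : R)
    · obtain ⟨a, b, hab⟩ := IsLocalRing.exists_sq_add_sq_eq_neg_one h2
      exact Matrix.prodsOfIdempotentsAreProdsOfTwo_fin_two.of_mulEquiv
        (Quaternion.equivMatrix hab h2).toMulEquiv
    · exact .of_forall_eq_zero_or_one fun e ↦ Quaternion.eq_zero_or_one_of_isIdempotentElem h2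
  constructor
  · rintro ⟨l, -, hl, rfl⟩
    exact hprod l hl
  · rintro ⟨e₁, e₂, h₁, h₂, rfl⟩
    exact ⟨[e₁, e₂], by simp, by simp [h₁, h₂], by simp⟩

/-- Over a finite commutative local principal ring `R`, an element of the quaternion ring
`H(R)` is a product of `r ≥ 1` idempotents iff it is a product of two idempotents. -/
theorem quaternion_prod_idempotents_iff_two (R : Type*) [CommRing R] [Finite R]
    [IsLocalRing R] [IsPrincipalIdealRing R] (x : ℍ[R]) :
    (∃ l : List ℍ[R], l ≠ [] ∧ (∀ e ∈ l, IsIdempotentElem e) ∧ x = l.prod) ↔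
      (∃ e₁ e₂ : ℍ[R], IsIdempotentElem e₁ ∧ IsIdempotentElem e₂ ∧ x = e₁ * e₂) :=
  quaternion_prod_idempotents_iff_two_general R x
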